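/- arXiv:2411.06367 — 2 statements merged into one kernel-verified Lean document; each statement's English description precedes it below -/
import Mathlib

section
/- For every real a ≥ 0, Φ(a√2) − Φ(a) ≤ (1/√(2π)) ∫ from √(ln 2) to √(2·ln 2) of e^{−t²/2} dt, and this integral value is strictly less than 1/6 (it is approximately 0.08302). -/
open MeasureTheory ProbabilityTheory Real

/-- The standard normal cumulative distribution function
`Φ(x) = (1/√(2π)) ∫_{-∞}^{x} e^{-t²/2} dt`. -/
noncomputable def stdGaussianCDF (x : ℝ) : ℝ :=
  (Real.sqrt (2 * Real.pi))⁻¹ * ∫ t in Set.Iic x, Real.exp (-t ^ 2 / 2)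

/-!
With `φ t = e^{-t²/2}` and `c > 1`, the window integral `a ↦ ∫_a^{ac} φ` has derivative
`c φ(ac) - φ(a)`, which is nonnegative exactly when `a² ≤ 2 log c / (c² - 1)`; hence on `[0, ∞)`
it is maximal at `a = √(2 log c / (c² - 1))`, which is `√(log 2)` for `c = √2`.
As `φ` decreases on `[0, ∞)`, the maximal window is at most the rectangle
`(√2 - 1) √(log 2) φ(√(log 2)) = √(log 2) (1 - √2/2) < 0.3`, and `0.3 / √(2π) < 1/6`.
-/

open Set intervalIntegral

theorem isMaxOn_Ici_of_hasDerivAt {f f' : ℝ → ℝ} {l m : ℝ} (hlm : l ≤ m)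
    (hf : ∀ x, HasDerivAt f (f' x) x) (hinc : ∀ x ∈ Ioo l m, 0 ≤ f' x)
    (hdec : ∀ x ∈ Ioi m, f' x ≤ 0) : IsMaxOn f (Ici l) m := by
  have hcont : Continuous f := continuous_iff_continuousAt.2 fun x => (hf x).continuousAt
  intro a (ha : l ≤ a)
  rcases le_total a m with ham | hma
  · refine monotoneOn_of_hasDerivWithinAt_nonneg (convex_Icc l m) hcont.continuousOn
      (fun x _ => (hf x).hasDerivWithinAt) (fun x hx => hinc x ?_) ⟨ha, ham⟩ ⟨hlm, le_rfl⟩ ham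
    rwa [interior_Icc] at hx
  · refine antitoneOn_of_hasDerivWithinAt_nonpos (convex_Ici m) hcont.continuousOn
      (fun x _ => (hf x).hasDerivWithinAt) (fun x hx => hdec x ?_) self_mem_Ici hma hma
    rwa [interior_Ici] at hx

theorem hasDerivAt_integral_mul_right {g : ℝ → ℝ} (hg : Continuous g) (c a : ℝ) :
    HasDerivAt (fun x => ∫ t in x..x * c, g t) (g (a * c) * c - g a) a := by
  have hprim (y : ℝ) : HasDerivAt (fun u => ∫ t in (0 : ℝ)..u, g t) (g y) y :=
    (hg.integral_hasStrictDerivAt 0 y).hasDerivAt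
  have hsplit : (fun x => ∫ t in x..x * c, g t)
      = fun x => (∫ t in (0 : ℝ)..x * c, g t) - ∫ t in (0 : ℝ)..x, g t := by
    funext x
    rw [integral_interval_sub_left (hg.intervalIntegrable _ _) (hg.intervalIntegrable _ _)]
  rw [hsplit]
  exact ((hprim (a * c)).comp a (hasDerivAt_mul_const c)).sub (hprim a)

theorem continuous_exp_neg_sq_div_two : Continuous fun t : ℝ => exp (-t ^ 2 / 2) := by
  fun_prop

theorem exp_neg_sq_div_two_le_mul_iff {c x : ℝ} (hc : 1 < c) :
    exp (-x ^ 2 / 2) ≤ exp (-(x * c) ^ 2 / 2) * c ↔ x ^ 2 ≤ 2 * log c / (c ^ 2 - 1) := by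
  have hc2 : 0 < c ^ 2 - 1 := by nlinarith
  rw [← exp_log (by linarith : 0 < c), ← exp_add, exp_le_exp, exp_log (by linarith),
    le_div_iff₀ hc2]
  constructor <;> intro h <;> nlinarith

theorem integral_exp_neg_sq_div_two_mul_le {c a : ℝ} (hc : 1 < c) (ha : 0 ≤ a) :
    ∫ t in a..a * c, exp (-t ^ 2 / 2)
      ≤ ∫ t in √(2 * log c / (c ^ 2 - 1))..√(2 * log c / (c ^ 2 - 1)) * c, exp (-t ^ 2 / 2) := by
  set m := √(2 * log c / (c ^ 2 - 1))
  have hm2 : m ^ 2 = 2 * log c / (c ^ 2 - 1) :=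
    sq_sqrt (div_nonneg (by have := log_pos hc; linarith) (by nlinarith))
  refine isMaxOn_Ici_of_hasDerivAt (sqrt_nonneg _)
    (hasDerivAt_integral_mul_right continuous_exp_neg_sq_div_two c) (fun x hx => ?_)
    (fun x hx => ?_) (mem_Ici.2 ha)
  · rw [sub_nonneg, exp_neg_sq_div_two_le_mul_iff hc, ← hm2]
    exact pow_le_pow_left₀ hx.1.le hx.2.le 2
  · rw [sub_nonpos]
    refine le_of_not_ge fun h => ?_
    rw [exp_neg_sq_div_two_le_mul_iff hc, ← hm2] at h
    exact absurd (pow_lt_pow_left₀ (mem_Ioi.1 hx) (sqrt_nonneg _) two_ne_zero) h.not_gt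

theorem integral_exp_neg_sq_div_two_le {x y : ℝ} (hx : 0 ≤ x) (hxy : x ≤ y) :
    ∫ t in x..y, exp (-t ^ 2 / 2) ≤ (y - x) * exp (-x ^ 2 / 2) := by
  have hle : ∫ t in x..y, exp (-t ^ 2 / 2) ≤ ∫ _ in x..y, exp (-x ^ 2 / 2) :=
    integral_mono_on hxy (continuous_exp_neg_sq_div_two.intervalIntegrable _ _)
      intervalIntegrable_const fun t ht => exp_le_exp.2 (by nlinarith [ht.1])
  simpa using hle

theorem stdGaussianCDF_sub (a b : ℝ) :
    stdGaussianCDF b - stdGaussianCDF a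
      = (√(2 * π))⁻¹ * ∫ t in a..b, exp (-t ^ 2 / 2) := by
  have hint : Integrable fun t : ℝ => exp (-t ^ 2 / 2) := by
    simpa [div_eq_inv_mul] using integrable_exp_neg_mul_sq (b := (1 / 2 : ℝ)) (by norm_num)
  rw [stdGaussianCDF, stdGaussianCDF, ← mul_sub,
    integral_Iic_sub_Iic hint.integrableOn hint.integrableOn]

theorem inv_sqrt_two_pi_mul_rectangle_bound_lt :
    (√(2 * π))⁻¹ * ((√(2 * log 2) - √(log 2)) * exp (-√(log 2) ^ 2 / 2)) < 1 / 6 := by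
  have hlog : 0 < log 2 := log_pos one_lt_two
  have hs2 : √2 ^ 2 = 2 := sq_sqrt zero_le_two
  have hwidth : (√(2 * log 2) - √(log 2)) * exp (-√(log 2) ^ 2 / 2)
      = √(log 2) * (1 - √2 / 2) := by
    rw [sq_sqrt hlog.le, neg_div, exp_neg, ← log_sqrt zero_le_two, exp_log (by positivity),
      sqrt_mul zero_le_two]
    field_simp
    linear_combination hs2
  have hL : √(log 2) < 1 := (sqrt_lt' one_pos).2 (by linarith [log_two_lt_d9])
  have hs : 1.4 < √2 := (lt_sqrt (by norm_num)).2 (by norm_num)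
  have hs' : √2 < 2 := (sqrt_lt' two_pos).2 (by norm_num)
  have hp : (√(2 * π))⁻¹ < 2.4⁻¹ :=
    inv_strictAnti₀ (by norm_num) ((lt_sqrt (by norm_num)).2 (by linarith [pi_gt_three]))
  rw [hwidth]
  calc (√(2 * π))⁻¹ * (√(log 2) * (1 - √2 / 2)) ≤ 2.4⁻¹ * (1 * 0.3) := by
        have : 0 ≤ 1 - √2 / 2 := by linarith
        gcongr
        linarith
    _ < 1 / 6 := by norm_num

theorem stmt9 (a : ℝ) (ha : 0 ≤ a) :
    stdGaussianCDF (a * Real.sqrt 2) - stdGaussianCDF a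
        ≤ (Real.sqrt (2 * Real.pi))⁻¹
          * ∫ t in Real.sqrt (Real.log 2)..Real.sqrt (2 * Real.log 2), Real.exp (-t ^ 2 / 2)
      ∧ (Real.sqrt (2 * Real.pi))⁻¹
          * (∫ t in Real.sqrt (Real.log 2)..Real.sqrt (2 * Real.log 2), Real.exp (-t ^ 2 / 2))
        < 1 / 6 := by
  have hlog : 0 < log 2 := log_pos one_lt_two
  have hmax : √(2 * log √2 / (√2 ^ 2 - 1)) = √(log 2) := by
    rw [log_sqrt zero_le_two, sq_sqrt zero_le_two]
    congr 1
    ring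
  have hscale : √(log 2) * √2 = √(2 * log 2) := by
    rw [← sqrt_mul hlog.le, mul_comm]
  refine ⟨?_, ?_⟩
  · rw [stdGaussianCDF_sub, ← hscale, ← hmax]
    gcongr
    exact integral_exp_neg_sq_div_two_mul_le one_lt_sqrt_two ha
  · calc (√(2 * π))⁻¹ * ∫ t in √(log 2)..√(2 * log 2), exp (-t ^ 2 / 2)
        ≤ (√(2 * π))⁻¹ * ((√(2 * log 2) - √(log 2)) * exp (-√(log 2) ^ 2 / 2)) := by
          gcongr
          exact integral_exp_neg_sq_div_two_le (sqrt_nonneg _) (sqrt_le_sqrt (by linarith))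
      _ < 1 / 6 := inv_sqrt_two_pi_mul_rectangle_bound_lt
end

section
/- Let a ≥ 0 and set q₁ = Φ(a), q₂ = Φ(a√2), q₃ = Φ(a√3). Then 7q₁ − 3q₂ − 3q₃ ≥ 0.1217; in particular 7q₁ − 3q₂ − 3q₃ > 0 for all a ≥ 0. -/
open MeasureTheory ProbabilityTheory Real

/-!
Put `g(t) = 7e^{-t²/2} − 3√2 e^{-t²} − 3√3 e^{-3t²/2}`, so that the combination equals
`1/2 + (2π)^{-1/2} ∫₀ᵃ g`. In terms of `u = e^{-t²/2}`, `g = u (7 − 3√2 u − 3√3 u²)` and the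
quadratic factor decreases in `u`, so `g` changes sign once on `t ≥ 0`, near `t ≈ 0.6285`:
`g ≤ 0` on `[0, 5/8]`, `g ≥ -0.006` on `[5/8, 0.63]` and `g ≥ 0` beyond. The minimum is thus
controlled by `∫₀^{5/8} g`, which is estimated by integrating the degree-8 Taylor expansion of
each `e^{-ct²}` term by term.
-/

open Set Finset
open scoped Nat

lemma integrable_exp_neg_sq_div_two : Integrable fun t : ℝ ↦ exp (-t ^ 2 / 2) := by
  simpa [div_eq_inv_mul, neg_mul] using integrable_exp_neg_mul_sq (by norm_num : (0 : ℝ) < 2⁻¹)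

lemma integral_Iic_zero_exp_neg_sq_div_two :
    ∫ t in Iic (0 : ℝ), exp (-t ^ 2 / 2) = √(2 * π) / 2 := by
  have h := integral_comp_neg_Ioi 0 fun t : ℝ ↦ exp (-t ^ 2 / 2)
  simp only [neg_sq, neg_zero] at h
  rw [← h]
  simpa [div_eq_inv_mul, neg_mul, div_inv_eq_mul, mul_comm] using integral_gaussian_Ioi 2⁻¹

lemma stdGaussianCDF_eq_half_add (x : ℝ) :
    stdGaussianCDF x = 1 / 2 + (√(2 * π))⁻¹ * ∫ t in (0 : ℝ)..x, exp (-t ^ 2 / 2) := by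
  rw [stdGaussianCDF, ← intervalIntegral.integral_Iic_sub_Iic
    integrable_exp_neg_sq_div_two.integrableOn integrable_exp_neg_sq_div_two.integrableOn,
    integral_Iic_zero_exp_neg_sq_div_two]
  have : √(2 * π) ≠ 0 := by positivity
  field_simp
  ring

lemma integral_exp_neg_sq_div_two_mul (a s : ℝ) :
    ∫ t in (0 : ℝ)..a * s, exp (-t ^ 2 / 2)
      = s * ∫ t in (0 : ℝ)..a, exp (-(s ^ 2 / 2 * t ^ 2)) := by
  have h := intervalIntegral.smul_integral_comp_mul_right (a := 0) (b := a)
    (fun t ↦ exp (-t ^ 2 / 2)) s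
  rw [zero_mul, smul_eq_mul] at h
  rw [← h]
  congr 1
  refine intervalIntegral.integral_congr fun t _ ↦ ?_
  ring_nf

lemma abs_exp_neg_sub_sum_le {y : ℝ} (hy₀ : 0 ≤ y) (hy₁ : y ≤ 1) {n : ℕ} (hn : 0 < n) :
    |exp (-y) - ∑ k ∈ range n, (-y) ^ k / k !| ≤ y ^ n * ((n + 1) / (n ! * n)) := by
  have h := Real.exp_bound (x := -y) (by rwa [abs_neg, abs_of_nonneg hy₀]) hn
  rwa [abs_neg, abs_of_nonneg hy₀, Nat.succ_eq_add_one, Nat.cast_add_one] at h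

lemma integral_sum_taylor_exp_neg_mul_sq (c b : ℝ) (n : ℕ) :
    ∫ t in (0 : ℝ)..b, ∑ k ∈ range n, (-(c * t ^ 2)) ^ k / k !
      = ∑ k ∈ range n, (-c) ^ k * b ^ (2 * k + 1) / (k ! * (2 * k + 1)) := by
  rw [intervalIntegral.integral_finsetSum fun k _ ↦ by
    apply Continuous.intervalIntegrable; fun_prop]
  refine Finset.sum_congr rfl fun k _ ↦ ?_
  have h : (fun t : ℝ ↦ (-(c * t ^ 2)) ^ k / k !) = fun t ↦ (-c) ^ k / k ! * t ^ (2 * k) := by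
    funext t; ring
  rw [h, intervalIntegral.integral_const_mul, integral_pow]
  push_cast
  field_simp
  ring

lemma abs_integral_exp_neg_mul_sq_sub_sum_le {c b : ℝ} (hc : 0 ≤ c) (hb : 0 ≤ b)
    (hcb : c * b ^ 2 ≤ 1) {n : ℕ} (hn : 0 < n) :
    |(∫ t in (0 : ℝ)..b, exp (-(c * t ^ 2)))
        - ∑ k ∈ range n, (-c) ^ k * b ^ (2 * k + 1) / (k ! * (2 * k + 1))|
      ≤ c ^ n * b ^ (2 * n + 1) / (2 * n + 1) * ((n + 1) / (n ! * n)) := by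
  have hrem : ∫ t in (0 : ℝ)..b, (c * t ^ 2) ^ n * ((n + 1) / (n ! * n))
      = c ^ n * b ^ (2 * n + 1) / (2 * n + 1) * ((n + 1) / (n ! * n)) := by
    simp_rw [mul_pow, ← pow_mul]
    rw [intervalIntegral.integral_mul_const, intervalIntegral.integral_const_mul, integral_pow]
    push_cast
    ring
  rw [← integral_sum_taylor_exp_neg_mul_sq, ← intervalIntegral.integral_sub
    (by apply Continuous.intervalIntegrable; fun_prop)
    (by apply Continuous.intervalIntegrable; fun_prop), ← hrem]
  refine (intervalIntegral.abs_integral_le_integral_abs hb).trans <|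
    intervalIntegral.integral_mono_on hb (by apply Continuous.intervalIntegrable; fun_prop)
      (by apply Continuous.intervalIntegrable; fun_prop) fun t ht ↦ ?_
  refine abs_exp_neg_sub_sum_le (by positivity) ?_ hn
  calc c * t ^ 2 ≤ c * b ^ 2 := by gcongr; exacts [ht.1, ht.2]
    _ ≤ 1 := hcb

lemma sub_mul_le_integral_of_sign_change {g : ℝ → ℝ} (hg : Continuous g) {t₀ t₁ δ a : ℝ}
    (ht : t₀ ≤ t₁) (hδ : 0 ≤ δ) (ha : 0 ≤ a) (hneg : ∀ t ∈ Icc 0 t₀, g t ≤ 0)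
    (hmid : ∀ t ∈ Icc t₀ t₁, -δ ≤ g t) (hpos : ∀ t ∈ Ici t₁, 0 ≤ g t) :
    (∫ t in (0 : ℝ)..t₀, g t) - δ * (t₁ - t₀) ≤ ∫ t in (0 : ℝ)..a, g t := by
  have hint : ∀ u v : ℝ, IntervalIntegrable g volume u v := hg.intervalIntegrable
  rw [← intervalIntegral.integral_add_adjacent_intervals (hint 0 t₀) (hint t₀ a)]
  suffices -(δ * (t₁ - t₀)) ≤ ∫ t in t₀..a, g t by linarith
  rcases le_total a t₀ with hat₀ | ht₀a
  · rw [intervalIntegral.integral_symm, neg_le_neg_iff]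
    calc (∫ t in a..t₀, g t) ≤ ∫ _ in a..t₀, (0 : ℝ) :=
          intervalIntegral.integral_mono_on hat₀ (hint _ _) intervalIntegrable_const
            fun t h ↦ hneg t ⟨ha.trans h.1, h.2⟩
      _ = 0 := intervalIntegral.integral_zero
      _ ≤ δ * (t₁ - t₀) := mul_nonneg hδ (sub_nonneg.2 ht)
  rcases le_total a t₁ with hat₁ | ht₁a
  · calc -(δ * (t₁ - t₀)) ≤ -(δ * (a - t₀)) := by gcongr
      _ = ∫ _ in t₀..a, -δ := by simp [mul_comm]
      _ ≤ ∫ t in t₀..a, g t :=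
          intervalIntegral.integral_mono_on ht₀a intervalIntegrable_const (hint _ _)
            fun t h ↦ hmid t ⟨h.1, h.2.trans hat₁⟩
  · rw [← intervalIntegral.integral_add_adjacent_intervals (hint t₀ t₁) (hint t₁ a)]
    have hmid' : ∫ _ in t₀..t₁, -δ ≤ ∫ t in t₀..t₁, g t :=
      intervalIntegral.integral_mono_on ht intervalIntegrable_const (hint _ _) hmid
    have hpos' : 0 ≤ ∫ t in t₁..a, g t :=
      intervalIntegral.integral_nonneg ht₁a fun t h ↦ hpos t h.1
    simp only [intervalIntegral.integral_const, smul_eq_mul] at hmid'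
    linarith

-- `25/128 = (5/8)²/2` and `3969/20000 = 0.63²/2`.
lemma exp_neg_25_128_mem : exp (-(25 / 128)) ∈ Icc (0.82257 : ℝ) 0.82258 := by
  have h := abs_sub_le_iff.1 <| abs_exp_neg_sub_sum_le (y := 25 / 128) (by norm_num) (by norm_num)
    (n := 6) (by norm_num)
  norm_num [Finset.sum_range_succ, Nat.factorial] at h
  constructor <;> linarith

lemma exp_neg_3969_20000_le : exp (-(3969 / 20000)) ≤ (0.82001 : ℝ) := by
  have h := abs_sub_le_iff.1 <| abs_exp_neg_sub_sum_le (y := 3969 / 20000) (by norm_num)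
    (by norm_num) (n := 6) (by norm_num)
  norm_num [Finset.sum_range_succ, Nat.factorial] at h
  linarith

lemma sqrt_two_mem : √2 ∈ Icc (1.41421356 : ℝ) 1.41421357 :=
  ⟨Real.le_sqrt_of_sq_le (by norm_num), Real.sqrt_le_iff.2 ⟨by norm_num, by norm_num⟩⟩

lemma sqrt_three_mem : √3 ∈ Icc (1.7320508 : ℝ) 1.73205081 :=
  ⟨Real.le_sqrt_of_sq_le (by norm_num), Real.sqrt_le_iff.2 ⟨by norm_num, by norm_num⟩⟩

noncomputable def gaussComb (t : ℝ) : ℝ :=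
  7 * exp (-(1 / 2 * t ^ 2)) - 3 * √2 * exp (-t ^ 2) - 3 * √3 * exp (-(3 / 2 * t ^ 2))

noncomputable def gaussCombFactor (u : ℝ) : ℝ :=
  7 - 3 * √2 * u - 3 * √3 * u ^ 2

lemma continuous_gaussComb : Continuous gaussComb := by
  unfold gaussComb; fun_prop

lemma gaussComb_eq_mul_factor (t : ℝ) :
    gaussComb t = exp (-(1 / 2 * t ^ 2)) * gaussCombFactor (exp (-(1 / 2 * t ^ 2))) := by
  have h₂ : exp (-t ^ 2) = exp (-(1 / 2 * t ^ 2)) ^ 2 := by rw [← exp_nat_mul]; ring_nf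
  have h₃ : exp (-(3 / 2 * t ^ 2)) = exp (-(1 / 2 * t ^ 2)) ^ 3 := by rw [← exp_nat_mul]; ring_nf
  rw [gaussComb, gaussCombFactor, h₂, h₃]
  ring

lemma gaussCombFactor_nonpos {u : ℝ} (hu : 0.82257 ≤ u) : gaussCombFactor u ≤ 0 := by
  have h₂ := sqrt_two_mem.1
  have h₃ := sqrt_three_mem.1
  have hu₀ : (0 : ℝ) ≤ u := by linarith
  unfold gaussCombFactor
  nlinarith [mul_le_mul h₂ hu (by norm_num) (by positivity),
    mul_le_mul h₃ (pow_le_pow_left₀ (by norm_num) hu 2) (by norm_num) (by positivity)]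

lemma neg_le_gaussCombFactor {u : ℝ} (hu₀ : 0 ≤ u) (hu : u ≤ 0.82258) :
    -0.006 ≤ gaussCombFactor u := by
  have h₂ := sqrt_two_mem.2
  have h₃ := sqrt_three_mem.2
  unfold gaussCombFactor
  nlinarith [mul_le_mul h₂ hu hu₀ (by norm_num),
    mul_le_mul h₃ (pow_le_pow_left₀ hu₀ hu 2) (by positivity) (by norm_num)]

lemma gaussCombFactor_nonneg {u : ℝ} (hu₀ : 0 ≤ u) (hu : u ≤ 0.82001) :
    0 ≤ gaussCombFactor u := by
  have h₂ := sqrt_two_mem.2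
  have h₃ := sqrt_three_mem.2
  unfold gaussCombFactor
  nlinarith [mul_le_mul h₂ hu hu₀ (by norm_num),
    mul_le_mul h₃ (pow_le_pow_left₀ hu₀ hu 2) (by positivity) (by norm_num)]

lemma gaussComb_nonpos {t : ℝ} (ht : t ^ 2 ≤ 25 / 64) : gaussComb t ≤ 0 := by
  rw [gaussComb_eq_mul_factor]
  refine mul_nonpos_of_nonneg_of_nonpos (exp_pos _).le (gaussCombFactor_nonpos ?_)
  exact exp_neg_25_128_mem.1.trans (exp_le_exp.2 (by linarith))

lemma neg_le_gaussComb {t : ℝ} (ht : 25 / 64 ≤ t ^ 2) : -0.006 ≤ gaussComb t := by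
  have hu₀ := (exp_pos (-(1 / 2 * t ^ 2))).le
  have hu₁ : exp (-(1 / 2 * t ^ 2)) ≤ 1 := exp_le_one_iff.2 (by nlinarith)
  have hf := neg_le_gaussCombFactor hu₀
    ((exp_le_exp.2 (by linarith)).trans exp_neg_25_128_mem.2)
  rw [gaussComb_eq_mul_factor]
  nlinarith

lemma gaussComb_nonneg {t : ℝ} (ht : 0.3969 ≤ t ^ 2) : 0 ≤ gaussComb t := by
  rw [gaussComb_eq_mul_factor]
  refine mul_nonneg (exp_pos _).le (gaussCombFactor_nonneg (exp_pos _).le ?_)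
  exact (exp_le_exp.2 (by linarith)).trans exp_neg_3969_20000_le

lemma integral_gaussComb (b : ℝ) :
    ∫ t in (0 : ℝ)..b, gaussComb t
      = 7 * (∫ t in (0 : ℝ)..b, exp (-(1 / 2 * t ^ 2)))
        - 3 * √2 * (∫ t in (0 : ℝ)..b, exp (-t ^ 2))
        - 3 * √3 * (∫ t in (0 : ℝ)..b, exp (-(3 / 2 * t ^ 2))) := by
  have hint : ∀ c : ℝ, IntervalIntegrable (fun t ↦ exp (-(c * t ^ 2))) volume 0 b := fun c ↦ by
    apply Continuous.intervalIntegrable; fun_prop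
  have h₁ := (hint 1).const_mul (3 * √2)
  simp only [one_mul] at h₁
  rw [← intervalIntegral.integral_const_mul, ← intervalIntegral.integral_const_mul,
    ← intervalIntegral.integral_const_mul, ← intervalIntegral.integral_sub
    ((hint _).const_mul _) h₁, ← intervalIntegral.integral_sub
    (((hint _).const_mul _).sub h₁) ((hint _).const_mul _)]
  rfl

lemma le_integral_gaussComb_zero_five_eighths :
    -0.9482 ≤ ∫ t in (0 : ℝ)..5 / 8, gaussComb t := by
  have taylor := fun (c : ℝ) (hc : 0 ≤ c) (hc' : c ≤ 2) ↦ abs_sub_le_iff.1 <|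
    abs_integral_exp_neg_mul_sq_sub_sum_le (c := c) (b := 5 / 8) hc (by norm_num)
      (by nlinarith) (n := 8) (by norm_num)
  have h₁ := (taylor (1 / 2) (by norm_num) (by norm_num)).2
  have h₂ := (taylor 1 (by norm_num) (by norm_num)).1
  have h₃ := (taylor (3 / 2) (by norm_num) (by norm_num)).1
  simp only [one_mul] at h₂
  norm_num [Finset.sum_range_succ, Nat.factorial] at h₁ h₂ h₃
  have hI₂ : 0 ≤ ∫ t in (0 : ℝ)..5 / 8, exp (-t ^ 2) :=
    intervalIntegral.integral_nonneg (by norm_num) fun _ _ ↦ (exp_pos _).le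
  have hI₃ : 0 ≤ ∫ t in (0 : ℝ)..5 / 8, exp (-(3 / 2 * t ^ 2)) :=
    intervalIntegral.integral_nonneg (by norm_num) fun _ _ ↦ (exp_pos _).le
  rw [integral_gaussComb]
  nlinarith [mul_le_mul_of_nonneg_right sqrt_two_mem.2 hI₂,
    mul_le_mul_of_nonneg_right sqrt_three_mem.2 hI₃]

lemma le_integral_gaussComb {a : ℝ} (ha : 0 ≤ a) : -0.94824 ≤ ∫ t in (0 : ℝ)..a, gaussComb t := by
  have h := sub_mul_le_integral_of_sign_change continuous_gaussComb (t₀ := 5 / 8) (t₁ := 0.63)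
    (δ := 0.006) (by norm_num) (by norm_num) ha
    (fun t ht ↦ gaussComb_nonpos (by nlinarith [ht.1, ht.2]))
    (fun t ht ↦ neg_le_gaussComb (by nlinarith [ht.1]))
    (fun t ht ↦ gaussComb_nonneg (by nlinarith [ht.out]))
  linarith [le_integral_gaussComb_zero_five_eighths]

lemma stdGaussianCDF_combination_eq (a : ℝ) :
    7 * stdGaussianCDF a - 3 * stdGaussianCDF (a * √2) - 3 * stdGaussianCDF (a * √3)
      = 1 / 2 + (√(2 * π))⁻¹ * ∫ t in (0 : ℝ)..a, gaussComb t := by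
  simp only [stdGaussianCDF_eq_half_add, integral_exp_neg_sq_div_two_mul, integral_gaussComb,
    Real.sq_sqrt (by norm_num : (0 : ℝ) ≤ 2), Real.sq_sqrt (by norm_num : (0 : ℝ) ≤ 3)]
  have h₁ : ∫ t in (0 : ℝ)..a, exp (-t ^ 2 / 2) = ∫ t in (0 : ℝ)..a, exp (-(1 / 2 * t ^ 2)) :=
    intervalIntegral.integral_congr fun t _ ↦ by ring_nf
  norm_num [h₁]
  ring

theorem stmt12 (a : ℝ) (ha : 0 ≤ a) :
    0.1217 ≤ 7 * stdGaussianCDF a - 3 * stdGaussianCDF (a * Real.sqrt 2)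
        - 3 * stdGaussianCDF (a * Real.sqrt 3)
      ∧ 0 < 7 * stdGaussianCDF a - 3 * stdGaussianCDF (a * Real.sqrt 2)
        - 3 * stdGaussianCDF (a * Real.sqrt 3) := by
  have hsqrt : (2.50662 : ℝ) ≤ √(2 * π) :=
    Real.le_sqrt_of_sq_le (by nlinarith [Real.pi_gt_d6])
  have hinv : (√(2 * π))⁻¹ ≤ 2.50662⁻¹ := inv_anti₀ (by norm_num) hsqrt
  have hbound : 0.1217 ≤ 7 * stdGaussianCDF a - 3 * stdGaussianCDF (a * √2)
      - 3 * stdGaussianCDF (a * √3) := by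
    rw [stdGaussianCDF_combination_eq]
    have hk : 0 ≤ (√(2 * π))⁻¹ := inv_nonneg.2 (Real.sqrt_nonneg _)
    nlinarith [mul_le_mul_of_nonneg_left (le_integral_gaussComb ha) hk]
  exact ⟨hbound, lt_of_lt_of_le (by norm_num) hbound⟩
end
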